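/- arXiv:2111.14186 — 2 statements merged into one kernel-verified Lean document; each statement's English description precedes it below -/
import Mathlib

section
/- Let (X, μ) be a finite measure space, p > n ≥ 1 real numbers, and q = p(n+1)/(p(n+1) − n). Suppose g ≥ 0 is measurable with ∫ g dμ finite, u ≥ 0 is measurable, and set A = ∫ u·g dμ. If ∫ u^{(n+1)p/n} g dμ ≤ M · A^{p/n} for some M > 0, then A ≤ M^{1/p} · (∫ g dμ)^{(n+1)/(qn)}, and the exponent satisfies (n+1)/(qn) = 1 + (p−n)/(pn) > 1. -/
open MeasureTheory

/-!
Write `r = (n+1)p/n`; its conjugate exponent is `q`. Splitting `u g = (u g^{1/r}) · g^{1/q}`,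
Hölder's inequality and the hypothesis give `A ≤ (M A^{p/n})^{1/r} (∫ g)^{1/q}
= M^{1/r} (∫ g)^{1/q} A^{1/(n+1)}`. Since `1/(n+1) < 1`, the factor `A^{1/(n+1)}` can be
absorbed into the left-hand side, and raising to the power `(n+1)/n` gives the claim.
-/

lemma Real.holderConjugate_of_lt {n p : ℝ} (hn : 0 < n) (hp : n < p) :
    ((n + 1) * p / n).HolderConjugate (p * (n + 1) / (p * (n + 1) - n)) := by
  have hp0 : 0 < p := hn.trans hp
  have hden : 0 < p * (n + 1) - n := by nlinarith
  refine Real.holderConjugate_iff.mpr ⟨?_, ?_⟩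
  · rw [lt_div_iff₀ hn]
    nlinarith
  · field_simp
    ring

lemma Real.le_rpow_of_le_mul_rpow {A C θ : ℝ} (hA : 0 ≤ A) (hC : 0 ≤ C) (hθ : θ < 1)
    (h : A ≤ C * A ^ θ) : A ≤ C ^ (1 - θ)⁻¹ := by
  rcases hA.eq_or_lt with rfl | hA
  · positivity
  have hθ' : 0 < 1 - θ := sub_pos.mpr hθ
  have hAC : A ^ (1 - θ) ≤ C := by
    rw [Real.rpow_sub hA, Real.rpow_one, div_le_iff₀ (Real.rpow_pos_of_pos hA θ)]
    exact h
  calc A = (A ^ (1 - θ)) ^ (1 - θ)⁻¹ := (Real.rpow_rpow_inv hA.le hθ'.ne').symm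
    _ ≤ C ^ (1 - θ)⁻¹ :=
      Real.rpow_le_rpow (Real.rpow_nonneg hA.le _) hAC (inv_nonneg.mpr hθ'.le)

lemma Real.add_one_div_conj_mul_eq_one_add {n p : ℝ} (hn : 0 < n) (hp : n < p) :
    (n + 1) / (p * (n + 1) / (p * (n + 1) - n) * n) = 1 + (p - n) / (p * n) := by
  have hp0 : 0 < p := hn.trans hp
  have hden : 0 < p * (n + 1) - n := by nlinarith
  field_simp
  ring

lemma Real.le_rpow_mul_rpow_of_holder_bound {n p q M A B G : ℝ} (hn : 0 < n) (hp : 0 < p)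
    (hM : 0 ≤ M) (hA : 0 ≤ A) (hB : 0 ≤ B) (hG : 0 ≤ G)
    (hAB : A ≤ B ^ (1 / ((n + 1) * p / n)) * G ^ (1 / q)) (hBA : B ≤ M * A ^ (p / n)) :
    A ≤ M ^ (1 / p) * G ^ ((n + 1) / (q * n)) := by
  have hA_le : A ≤ M ^ (n / ((n + 1) * p)) * G ^ (1 / q) * A ^ (1 / (n + 1)) :=
    calc A ≤ (M * A ^ (p / n)) ^ (1 / ((n + 1) * p / n)) * G ^ (1 / q) := by
          refine hAB.trans (mul_le_mul_of_nonneg_right ?_ (Real.rpow_nonneg hG _))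
          exact Real.rpow_le_rpow hB hBA (by positivity)
      _ = M ^ (n / ((n + 1) * p)) * G ^ (1 / q) * A ^ (1 / (n + 1)) := by
          rw [Real.mul_rpow hM (Real.rpow_nonneg hA _), ← Real.rpow_mul hA]
          field_simp
  have habsorb := Real.le_rpow_of_le_mul_rpow hA (by positivity)
    (by rw [div_lt_one (by positivity)]; linarith) hA_le
  have hconj_exp : (1 - 1 / (n + 1))⁻¹ = (n + 1) / n := by
    rw [one_sub_div (by positivity), add_sub_cancel_right, inv_div]
  have hexp_M : n / ((n + 1) * p) * ((n + 1) / n) = 1 / p := by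
    field_simp
  rwa [hconj_exp, Real.mul_rpow (by positivity) (by positivity), ← Real.rpow_mul hM,
    ← Real.rpow_mul hG, hexp_M, one_div_mul_eq_div, div_div, mul_comm n q] at habsorb

section WeightedHolder

variable {X : Type*} [MeasurableSpace X] {μ : Measure X}

lemma memLp_ofReal_of_integrable_rpow {f : X → ℝ} {r : ℝ} (hf : 0 ≤ f)
    (hf_meas : AEStronglyMeasurable f μ) (hr : 0 < r)
    (hint : Integrable (fun x => f x ^ r) μ) : MemLp f (ENNReal.ofReal r) μ := by
  rw [← integrable_norm_rpow_iff hf_meas (by simpa using hr) ENNReal.ofReal_ne_top,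
    ENNReal.toReal_ofReal hr.le]
  simpa only [Real.norm_of_nonneg (hf _)] using hint

lemma integral_mul_weight_le_Lp_mul_Lq {r q : ℝ} (hrq : r.HolderConjugate q) {u w : X → ℝ}
    (hu : 0 ≤ u) (hw : 0 ≤ w) (hw_int : Integrable w μ)
    (huw_int : Integrable (fun x => u x ^ r * w x) μ) :
    ∫ x, u x * w x ∂μ ≤ (∫ x, u x ^ r * w x ∂μ) ^ (1 / r) * (∫ x, w x ∂μ) ^ (1 / q) := by
  have hr := hrq.pos
  have hq := hrq.symm.pos
  set f : X → ℝ := fun x => u x * w x ^ r⁻¹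
  set h : X → ℝ := fun x => w x ^ q⁻¹
  have hf : 0 ≤ f := fun x => mul_nonneg (hu x) (Real.rpow_nonneg (hw x) _)
  have hh : 0 ≤ h := fun x => Real.rpow_nonneg (hw x) _
  have hf_rpow : ∀ x, f x ^ r = u x ^ r * w x := fun x => by
    rw [Real.mul_rpow (hu x) (Real.rpow_nonneg (hw x) _), Real.rpow_inv_rpow (hw x) hr.ne']
  have hh_rpow : ∀ x, h x ^ q = w x := fun x => Real.rpow_inv_rpow (hw x) hq.ne'
  have hfh : ∀ x, f x * h x = u x * w x := fun x => by
    rw [mul_assoc, ← Real.rpow_add' (hw x) (by rw [hrq.inv_add_inv_eq_one]; norm_num),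
      hrq.inv_add_inv_eq_one, Real.rpow_one]
  have hf_meas : AEStronglyMeasurable f μ := by
    refine (huw_int.aemeasurable.pow_const r⁻¹).aestronglyMeasurable.congr
      (Filter.Eventually.of_forall fun x => ?_)
    show (u x ^ r * w x) ^ r⁻¹ = f x
    rw [← hf_rpow, Real.rpow_rpow_inv (hf x) hr.ne']
  have hf_mem : MemLp f (ENNReal.ofReal r) μ :=
    memLp_ofReal_of_integrable_rpow hf hf_meas hr (by simpa only [hf_rpow] using huw_int)
  have hh_mem : MemLp h (ENNReal.ofReal q) μ :=
    memLp_ofReal_of_integrable_rpow hh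
      (hw_int.aemeasurable.pow_const q⁻¹).aestronglyMeasurable hq
      (by simpa only [hh_rpow] using hw_int)
  simpa only [hfh, hf_rpow, hh_rpow] using
    integral_mul_le_Lp_mul_Lq_of_nonneg hrq (.of_forall hf) (.of_forall hh) hf_mem hh_mem

end WeightedHolder

theorem holder_self_improvement_general {X : Type*} [MeasurableSpace X] (μ : Measure X)
    (n p q M : ℝ) (hn : 1 ≤ n) (hp : n < p)
    (hq : q = p * (n+1) / (p * (n+1) - n)) (hM : 0 < M)
    (g u : X → ℝ) (hg : ∀ x, 0 ≤ g x) (hu : ∀ x, 0 ≤ u x)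
    (hgint : Integrable g μ)
    (hpowint : Integrable (fun x => (u x) ^ ((n+1) * p / n) * g x) μ)
    (hbound : ∫ x, (u x) ^ ((n+1) * p / n) * g x ∂μ
        ≤ M * (∫ x, u x * g x ∂μ) ^ (p / n)) :
    (∫ x, u x * g x ∂μ) ≤ M ^ (1/p) * (∫ x, g x ∂μ) ^ ((n+1)/(q*n)) ∧
    (n+1)/(q*n) = 1 + (p-n)/(p*n) ∧ 1 < (n+1)/(q*n) := by
  have hn0 : 0 < n := one_pos.trans_le hn
  subst hq
  have hexp := Real.add_one_div_conj_mul_eq_one_add hn0 hp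
  refine ⟨?_, hexp, hexp ▸ lt_add_of_pos_right 1 (div_pos (by linarith) (by nlinarith))⟩
  exact Real.le_rpow_mul_rpow_of_holder_bound hn0 (hn0.trans hp) hM.le
    (integral_nonneg fun x => mul_nonneg (hu x) (hg x))
    (integral_nonneg fun x => mul_nonneg (Real.rpow_nonneg (hu x) _) (hg x))
    (integral_nonneg hg)
    (integral_mul_weight_le_Lp_mul_Lq (Real.holderConjugate_of_lt hn0 hp) hu hg hgint hpowint)
    hbound

/-- Hölder step: from `∫ u^{(n+1)p/n} g ≤ M·A^{p/n}` with `A = ∫ u g`, conclude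
`A ≤ M^{1/p}·(∫ g)^{(n+1)/(qn)}`, where `q = p(n+1)/(p(n+1)-n)` and the exponent
`(n+1)/(qn) = 1 + (p-n)/(pn) > 1`. -/
theorem holder_self_improvement {X : Type*} [MeasurableSpace X] (μ : Measure X)
    [IsFiniteMeasure μ] (n p q M : ℝ) (hn : 1 ≤ n) (hp : n < p)
    (hq : q = p * (n+1) / (p * (n+1) - n)) (hM : 0 < M)
    (g u : X → ℝ) (hg : ∀ x, 0 ≤ g x) (hu : ∀ x, 0 ≤ u x)
    (hgint : Integrable g μ)
    (hugint : Integrable (fun x => u x * g x) μ)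
    (hpowint : Integrable (fun x => (u x) ^ ((n+1) * p / n) * g x) μ)
    (hbound : ∫ x, (u x) ^ ((n+1) * p / n) * g x ∂μ
        ≤ M * (∫ x, u x * g x ∂μ) ^ (p / n)) :
    (∫ x, u x * g x ∂μ) ≤ M ^ (1/p) * (∫ x, g x ∂μ) ^ ((n+1)/(q*n)) ∧
    (n+1)/(q*n) = 1 + (p-n)/(p*n) ∧ 1 < (n+1)/(q*n) :=
  holder_self_improvement_general μ n p q M hn hp hq hM g u hg hu hgint hpowint hbound
end

section
/- Let (X,μ) be a probability measure space and F measurable with ∫ e^F dμ = 1. Suppose u ≤ 0 is measurable and satisfies a uniform exponential integrability (α-invariant) bound: ∫ e^{−α₀ u} dμ ≤ C₀ for constants α₀, C₀ > 0. Then for every p ≥ 1 there is C = C(p, α₀, C₀, ‖e^F‖_{L¹(log L)^p}) such that ∫ (−u) e^F dμ ≤ C. -/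
open MeasureTheory

lemma young_aux (a s : ℝ) : a * Real.exp s ≤ Real.exp a + Real.exp s * (1 + |s|) := by
  have h1 : Real.exp s * ((a - s) + 1) ≤ Real.exp a := by
    have := mul_le_mul_of_nonneg_left (Real.add_one_le_exp (a - s)) (Real.exp_pos s).le
    rwa [← Real.exp_add, add_sub_cancel] at this
  nlinarith [(Real.exp_pos s).le, le_abs_self s, abs_nonneg s]

/-- Energy bound (Lemma 6 of [GPT]): on a probability space with `∫ e^F = 1`,
`u ≤ 0` satisfying the α-invariant bound `∫ e^{-α₀ u} ≤ C₀`, the energy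
`∫ (-u)·e^F` is bounded by a constant depending only on `p, α₀, C₀` and the
entropy `∫ e^F(1+|F|)^p ≤ N`. -/
theorem energy_bound (p α₀ C₀ N : ℝ) (hp : 1 ≤ p) (hα : 0 < α₀) (hC₀ : 0 < C₀)
    (hN : 0 < N) :
    ∃ C : ℝ, ∀ (X : Type) (_ : MeasurableSpace X) (μ : Measure X),
      IsProbabilityMeasure μ → ∀ F u : X → ℝ,
      Measurable F → Measurable u → (∀ x, u x ≤ 0) →
      Integrable (fun x => Real.exp (F x)) μ →
      (∫ x, Real.exp (F x) ∂μ) = 1 →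
      Integrable (fun x => Real.exp (-α₀ * u x)) μ →
      (∫ x, Real.exp (-α₀ * u x) ∂μ) ≤ C₀ →
      Integrable (fun x => Real.exp (F x) * (1 + |F x|) ^ p) μ →
      (∫ x, Real.exp (F x) * (1 + |F x|) ^ p ∂μ) ≤ N →
      (∫ x, (-u x) * Real.exp (F x) ∂μ) ≤ C := by
  refine ⟨(C₀ + N) / α₀, ?_⟩
  intro X _ μ hμ F u hF hu hu0 hIF hIF1 hIα hIαC hIN hNb
  -- pointwise: e^F(1+|F|) ≤ e^F(1+|F|)^p
  have hpw2 : ∀ x, Real.exp (F x) * (1 + |F x|) ≤ Real.exp (F x) * (1 + |F x|) ^ p := by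
    intro x
    have h1 : (1:ℝ) ≤ 1 + |F x| := by linarith [abs_nonneg (F x)]
    have := Real.rpow_le_rpow_of_exponent_le h1 hp
    rw [Real.rpow_one] at this
    exact mul_le_mul_of_nonneg_left this (Real.exp_pos _).le
  have hint1 : Integrable (fun x => Real.exp (F x) * (1 + |F x|)) μ := by
    refine hIN.mono ((hF.exp.mul (measurable_const.add hF.abs)).aestronglyMeasurable) ?_
    filter_upwards with x
    have h1 : (0:ℝ) ≤ Real.exp (F x) * (1 + |F x|) := by positivity
    have h2 : (0:ℝ) ≤ Real.exp (F x) * (1 + |F x|) ^ p := by positivity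
    rw [Real.norm_eq_abs, Real.norm_eq_abs, abs_of_nonneg h1, abs_of_nonneg h2]
    exact hpw2 x
  have hN1 : (∫ x, Real.exp (F x) * (1 + |F x|) ∂μ) ≤ N :=
    le_trans (integral_mono hint1 hIN hpw2) hNb
  -- pointwise domination
  have hpw : ∀ x, (-u x) * Real.exp (F x) ≤
      α₀⁻¹ * (Real.exp (-α₀ * u x) + Real.exp (F x) * (1 + |F x|)) := by
    intro x
    have hy := young_aux (-α₀ * u x) (F x)
    have heq : (-u x) * Real.exp (F x) = α₀⁻¹ * ((-α₀ * u x) * Real.exp (F x)) := by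
      field_simp
    rw [heq]
    exact mul_le_mul_of_nonneg_left hy (inv_nonneg.mpr hα.le)
  set g : X → ℝ := fun x => α₀⁻¹ * (Real.exp (-α₀ * u x) + Real.exp (F x) * (1 + |F x|))
  have hg : Integrable g μ := (hIα.add hint1).const_mul _
  have hgval : (∫ x, g x ∂μ) ≤ (C₀ + N) / α₀ := by
    have : (∫ x, g x ∂μ) = α₀⁻¹ * ((∫ x, Real.exp (-α₀ * u x) ∂μ)
        + ∫ x, Real.exp (F x) * (1 + |F x|) ∂μ) := by
      simp only [g, integral_const_mul, integral_add hIα hint1]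
    rw [this, div_eq_inv_mul]
    exact mul_le_mul_of_nonneg_left (add_le_add hIαC hN1) (inv_nonneg.mpr hα.le)
  by_cases hI : Integrable (fun x => (-u x) * Real.exp (F x)) μ
  · exact le_trans (integral_mono hI hg hpw) hgval
  · rw [integral_undef hI]
    positivity
end
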